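/- Let G be a finitely generated group acting on a CAT(0) cube complex C. If G has an orbit that is unbounded with respect to the ℓ∞-metric, then there exists a half-space D of C and an element g ∈ G with gD ⊊ D. -/

import Mathlib

/-- An abstract combinatorial model of a CAT(0) cube complex: a set of vertices `V`
together with a set of hyperplanes (walls) `H`, each hyperplane dividing the vertices
into two halfspaces via `side`.  Two hyperplanes are transverse exactly when they cross
(all four quadrants are inhabited), and only finitely many hyperplanes separate two
given vertices. -/
structure CCC where
  V : Type
  H : Type
  side : H → V → Prop
  transverse : H → H → Prop
  transverse_symm : ∀ h h', transverse h h' → transverse h' h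
  transverse_iff : ∀ h h', transverse h h' ↔ (h ≠ h' ∧ ∃ a b c d : V,
      (side h a ∧ side h' a) ∧ (side h b ∧ ¬ side h' b) ∧
      (¬ side h c ∧ side h' c) ∧ (¬ side h d ∧ ¬ side h' d))
  finsep : ∀ x y : V, {h : H | ¬ (side h x ↔ side h y)}.Finite

namespace CCC

variable (W : CCC)

/-- The hyperplane `h` separates the vertices `x` and `y`. -/
def Sep (h : W.H) (x y : W.V) : Prop := ¬ (W.side h x ↔ W.side h y)

/-- The combinatorial (ℓ¹) distance between vertices: the number of separating
hyperplanes. -/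
noncomputable def dist (x y : W.V) : ℕ := {h : W.H | W.Sep h x y}.ncard

/-- Two hyperplanes are disjoint if they are distinct and not transverse. -/
def Disj (h h' : W.H) : Prop := h ≠ h' ∧ ¬ W.transverse h h'

/-- The ℓ∞ distance between vertices: the maximal number of pairwise disjoint
hyperplanes separating them. -/
noncomputable def dinf (x y : W.V) : ℕ :=
  sSup {n : ℕ | ∃ S : Finset W.H, S.card = n ∧ (∀ h ∈ S, W.Sep h x y) ∧
    (S : Set W.H).Pairwise W.Disj}

/-- A set of vertices is combinatorially convex if it contains every vertex lying on a
combinatorial geodesic between two of its points. -/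
def Convex (C : Set W.V) : Prop :=
  ∀ x ∈ C, ∀ y ∈ C, ∀ z : W.V, W.dist x z + W.dist z y = W.dist x y → z ∈ C

theorem dist_comm (x y : W.V) : W.dist x y = W.dist y x := by
  unfold dist
  congr 1
  ext h
  simp only [Set.mem_setOf_eq, Sep]
  tauto

theorem dist_self (x : W.V) : W.dist x x = 0 := by
  have h : {h : W.H | W.Sep h x x} = ∅ := by ext h; simp [Sep]
  simp [dist, h]

/-- The 1-skeleton of the cube complex: two vertices are adjacent when exactly one
hyperplane separates them. -/
def oneSkeleton : SimpleGraph W.V where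
  Adj x y := W.dist x y = 1
  symm := ⟨fun x y hxy => (W.dist_comm y x).trans hxy⟩
  loopless := ⟨fun x hx => by have := W.dist_self x; omega⟩

/-- `m` is a median vertex of `x`, `y`, `z`. -/
def IsMedian (x y z m : W.V) : Prop :=
  W.dist x y = W.dist x m + W.dist m y ∧
  W.dist x z = W.dist x m + W.dist m z ∧
  W.dist y z = W.dist y m + W.dist m z

/-- The hyperplane `J` separates the hyperplanes `A` and `B`: all of `A` lies in one
halfspace of `J` and all of `B` in the other. -/
def SepHH (J A B : W.H) : Prop :=
  ((∀ x y : W.V, W.Sep A x y → W.side J x) ∧ (∀ x y : W.V, W.Sep B x y → ¬ W.side J x)) ∨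
  ((∀ x y : W.V, W.Sep A x y → ¬ W.side J x) ∧ (∀ x y : W.V, W.Sep B x y → W.side J x))

/-- A `(p,q)`-grid of hyperplanes: two families of hyperplanes, each hyperplane of the
first transverse to each of the second, and inside each family every hyperplane
separates its two neighbours. -/
def IsGrid {p q : ℕ} (v : Fin p → W.H) (hh : Fin q → W.H) : Prop :=
  Function.Injective v ∧ Function.Injective hh ∧
  (∀ (i : Fin p) (j : Fin q), W.transverse (v i) (hh j)) ∧
  (∀ i : Fin p, 0 < i.val → ∀ (hlt : i.val + 1 < p),
    W.SepHH (v i) (v ⟨i.val - 1, lt_of_le_of_lt (Nat.sub_le _ _) i.isLt⟩) (v ⟨i.val + 1, hlt⟩)) ∧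
  (∀ j : Fin q, 0 < j.val → ∀ (hlt : j.val + 1 < q),
    W.SepHH (hh j) (hh ⟨j.val - 1, lt_of_le_of_lt (Nat.sub_le _ _) j.isLt⟩) (hh ⟨j.val + 1, hlt⟩))

/-- A discrete geodesic for the ℓ∞ metric: a chain of vertices from `x` to `y`, each
step of `dinf`-length at most one, whose number of steps is `dinf x y`. -/
def IsInfGeodesic {n : ℕ} (x y : W.V) (f : Fin (n + 1) → W.V) : Prop :=
  f 0 = x ∧ f (Fin.last n) = y ∧ n = W.dinf x y ∧
  ∀ i : Fin n, W.dinf (f i.castSucc) (f i.succ) ≤ 1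

end CCC

/-!
Fix a vertex `v` and a finite generating set `S`. The half-space at `v` of any hyperplane
separating `v` from a point `g • v` of its orbit is a translate of one of the finitely many
half-spaces of hyperplanes separating `v` from some `s • v`, `s ∈ S`. An unbounded
ℓ∞-orbit gives arbitrarily many pairwise disjoint hyperplanes separating `v` from some
`g • v`, and their half-spaces at `v` are nested. By pigeonhole two of these, `D₁ ⊊ D₂`,
are translates `w₁ • B` and `w₂ • B` of the same half-space, so `(w₁ * w₂⁻¹) • D₂ = D₁ ⊊ D₂`.
Since several hyperplanes may bound the same half-space, the pigeonhole count uses that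
this multiplicity is invariant under the action.
-/

open Pointwise

theorem Finset.exists_eq_and_ne_of_mul_lt_card {α β γ : Type*} [DecidableEq β] [DecidableEq γ]
    {s : Finset α} {t : Finset γ} {b : α → γ} {f : α → β} {N : ℕ}
    (hb : ∀ a ∈ s, b a ∈ t) (hf : ∀ a ∈ s, {a' ∈ s | f a' = f a}.card ≤ N)
    (hcard : t.card * N < s.card) : ∃ a ∈ s, ∃ a' ∈ s, b a = b a' ∧ f a ≠ f a' := by
  obtain ⟨c, -, hc⟩ := Finset.exists_lt_card_fiber_of_mul_lt_card_of_maps_to hb hcard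
  obtain ⟨a, ha⟩ := Finset.card_pos.mp (N.zero_le.trans_lt hc)
  obtain ⟨has, rfl⟩ := Finset.mem_filter.mp ha
  by_contra! hcon
  refine (hc.trans_le (Finset.card_le_card fun a' ha' => ?_)).not_ge (hf a has)
  obtain ⟨ha's, hba'⟩ := Finset.mem_filter.mp ha'
  exact Finset.mem_filter.mpr ⟨ha's, (hcon a has a' ha's hba'.symm).symm⟩

namespace CCC

section Halfspaces

variable (W : CCC)

def halfspace (h : W.H) : Set W.V := {u | W.side h u}

def sideOf (h : W.H) (v : W.V) : Set W.V := {u | W.side h u ↔ W.side h v}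

def walls (B : Set W.V) : Set W.H := {h | W.halfspace h = B ∨ W.halfspace h = Bᶜ}

variable {W}

theorem Sep.symm {h : W.H} {x y : W.V} (hs : W.Sep h x y) : W.Sep h y x :=
  fun hxy => hs hxy.symm

theorem not_sep_self (h : W.H) (x : W.V) : ¬ W.Sep h x x := fun hs => hs Iff.rfl

theorem Sep.or_sep {h : W.H} {x z : W.V} (hs : W.Sep h x z) (y : W.V) :
    W.Sep h x y ∨ W.Sep h y z := by
  unfold Sep at *
  tauto

theorem sideOf_eq_or (h : W.H) (v : W.V) :
    W.sideOf h v = {u | W.side h u} ∨ W.sideOf h v = {u | ¬ W.side h u} := by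
  by_cases hv : W.side h v
  · exact Or.inl (Set.ext fun u => by simp [sideOf, hv])
  · exact Or.inr (Set.ext fun u => by simp [sideOf, hv])

theorem walls_compl (B : Set W.V) : W.walls Bᶜ = W.walls B := by
  ext h
  simp only [walls, Set.mem_ofPred_eq, compl_compl]
  tauto

theorem mem_walls_sideOf (h : W.H) (v : W.V) : h ∈ W.walls (W.sideOf h v) := by
  rcases W.sideOf_eq_or h v with hv | hv
  · exact Or.inl hv.symm
  · exact Or.inr (by rw [hv]; ext u; simp [halfspace])

theorem walls_halfspace_subset {h₀ : W.H} {x y : W.V} (hs : W.Sep h₀ x y) :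
    W.walls (W.halfspace h₀) ⊆ {h | W.Sep h x y} := by
  rintro h (hh | hh) <;>
  · have hx := Set.ext_iff.mp hh x
    have hy := Set.ext_iff.mp hh y
    simp only [halfspace, Set.mem_ofPred_eq, Set.mem_compl_iff] at hx hy
    simp only [Set.mem_ofPred_eq, Sep] at hs ⊢
    tauto

/-- Otherwise `x`, `y` and two witnesses of non-nesting inhabit all four quadrants. -/
theorem sideOf_subset_or_subset {h h' : W.H} {x y : W.V} (hs : W.Sep h x y)
    (hs' : W.Sep h' x y) (hd : W.Disj h h') :
    W.sideOf h x ⊆ W.sideOf h' x ∨ W.sideOf h' x ⊆ W.sideOf h x := by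
  by_contra hcon
  rw [not_or, Set.not_subset, Set.not_subset] at hcon
  obtain ⟨⟨p, hp, hp'⟩, ⟨q, hq', hq⟩⟩ := hcon
  simp only [sideOf, Set.mem_ofPred_eq] at hp hp' hq hq'
  unfold Sep at hs hs'
  refine hd.2 ((W.transverse_iff h h').2 ⟨hd.1, ?_⟩)
  by_cases h1 : W.side h x <;> by_cases h2 : W.side h' x
  · exact ⟨x, p, q, y, by tauto⟩
  · exact ⟨p, x, y, q, by tauto⟩
  · exact ⟨q, y, x, p, by tauto⟩
  · exact ⟨y, q, p, x, by tauto⟩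

theorem exists_pairwise_disj_of_le_dinf {x y : W.V} {M : ℕ} (hM : M ≤ W.dinf x y) :
    ∃ S : Finset W.H, M ≤ S.card ∧ (∀ h ∈ S, W.Sep h x y) ∧ (S : Set W.H).Pairwise W.Disj := by
  set A := {n : ℕ | ∃ S : Finset W.H, S.card = n ∧ (∀ h ∈ S, W.Sep h x y) ∧
    (S : Set W.H).Pairwise W.Disj}
  obtain ⟨n, ⟨S, rfl, hS⟩, hn⟩ : ∃ n ∈ A, M ≤ n := by
    by_cases hbdd : BddAbove A
    · exact ⟨_, Nat.sSup_mem ⟨0, ∅, by simp⟩ hbdd, hM⟩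
    · obtain ⟨n, hn, hMn⟩ := not_bddAbove_iff.mp hbdd M
      exact ⟨n, hn, hMn.le⟩
  exact ⟨S, hn, hS⟩

end Halfspaces

section Action

variable {W : CCC} {Γ : Type*} [Group Γ] [MulAction Γ W.V]

def IsCompatible (ψ : Γ → W.H → W.H) : Prop :=
  ∀ (g : Γ) (h : W.H) (v : W.V), W.side (ψ g h) (g • v) ↔ W.side h v

variable {ψ : Γ → W.H → W.H}

theorem smul_halfspace (hψ : W.IsCompatible ψ) (g : Γ) (h : W.H) :
    g • W.halfspace h = W.halfspace (ψ g h) := by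
  ext u
  rw [Set.mem_smul_set_iff_inv_smul_mem]
  simp only [halfspace, Set.mem_ofPred_eq]
  rw [← hψ g h, smul_inv_smul]

theorem sep_smul_iff (hψ : W.IsCompatible ψ) (g : Γ) (h : W.H) (x y : W.V) :
    W.Sep (ψ g h) (g • x) (g • y) ↔ W.Sep h x y := by
  simp only [Sep, hψ g h]

theorem walls_smul (hψ : W.IsCompatible ψ) {g : Γ} (hbij : Function.Bijective (ψ g))
    (B : Set W.V) : W.walls (g • B) = ψ g '' W.walls B := by
  ext h'
  obtain ⟨h, rfl⟩ := hbij.2 h'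
  rw [hbij.1.mem_set_image]
  simp only [walls, Set.mem_ofPred_eq, ← smul_halfspace hψ, ← Set.smul_set_compl,
    smul_left_cancel_iff]

/-- A hyperplane separating `v` from `(a * b) • v` separates `v` from `a • v`, or it is the
`a`-translate of one separating `v` from `b • v`. -/
theorem exists_halfspace_eq_smul_of_sep (hψ : W.IsCompatible ψ) {S : Set Γ}
    (hS : Subgroup.closure S = ⊤) (v : W.V) (g : Γ) :
    ∀ h : W.H, W.Sep h v (g • v) →
      ∃ s ∈ S, ∃ h₀ : W.H, W.Sep h₀ v (s • v) ∧ ∃ w : Γ, W.halfspace h = w • W.halfspace h₀ := by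
  induction (hS ▸ Subgroup.mem_top g : g ∈ Subgroup.closure S) using
    Subgroup.closure_induction with
  | mem s hs => exact fun h hsep => ⟨s, hs, h, hsep, 1, (one_smul Γ _).symm⟩
  | one =>
    intro h hsep
    rw [one_smul] at hsep
    exact absurd hsep (not_sep_self h v)
  | mul a b _ _ iha ihb =>
    intro h hsep
    rw [mul_smul] at hsep
    rcases hsep.or_sep (a • v) with hsep | hsep
    · exact iha h hsep
    · have hsep' : W.Sep (ψ a⁻¹ h) v (b • v) := by
        simpa only [inv_smul_smul] using (sep_smul_iff hψ a⁻¹ h _ _).2 hsep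
      obtain ⟨s, hs, h₀, hsep₀, w, hw⟩ := ihb _ hsep'
      refine ⟨s, hs, h₀, hsep₀, a * w, ?_⟩
      rw [mul_smul, ← hw, ← smul_halfspace hψ, smul_inv_smul]
  | inv a _ iha =>
    intro h hsep
    have hsep' : W.Sep (ψ a h) v (a • v) := by
      simpa only [smul_inv_smul] using ((sep_smul_iff hψ a h _ _).2 hsep).symm
    obtain ⟨s, hs, h₀, hsep₀, w, hw⟩ := iha _ hsep'
    refine ⟨s, hs, h₀, hsep₀, a⁻¹ * w, ?_⟩
    rw [mul_smul, ← hw, ← smul_halfspace hψ, inv_smul_smul]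

theorem exists_finset_translates (hψ : W.IsCompatible ψ)
    (hψbij : ∀ g : Γ, Function.Bijective (ψ g)) {S : Finset Γ}
    (hS : Subgroup.closure (S : Set Γ) = ⊤) (v : W.V) :
    ∃ (F : Finset (Set W.V)) (N : ℕ),
      (∀ B ∈ F, ∀ w : Γ, (W.walls (w • B)).Finite ∧ (W.walls (w • B)).ncard ≤ N) ∧
      ∀ (g : Γ) (h : W.H), W.Sep h v (g • v) → ∃ B ∈ F, ∃ w : Γ, W.sideOf h v = w • B := by
  classical
  set H₀ : Set W.H := ⋃ s ∈ S, {h | W.Sep h v (s • v)}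
  have hH₀ : H₀.Finite := S.finite_toSet.biUnion fun s _ => W.finsep v (s • v)
  set F := hH₀.toFinset.image W.halfspace ∪ hH₀.toFinset.image fun h => (W.halfspace h)ᶜ
  have hFwalls : ∀ B ∈ F, (W.walls B).Finite := by
    intro B hB
    obtain ⟨h₀, hh₀, hB⟩ : ∃ h₀ ∈ H₀, W.halfspace h₀ = B ∨ (W.halfspace h₀)ᶜ = B := by
      simp only [F, Finset.mem_union, Finset.mem_image, Set.Finite.mem_toFinset] at hB
      rcases hB with ⟨h₀, hh₀, rfl⟩ | ⟨h₀, hh₀, rfl⟩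
      exacts [⟨h₀, hh₀, .inl rfl⟩, ⟨h₀, hh₀, .inr rfl⟩]
    obtain ⟨s, -, hs⟩ := Set.mem_iUnion₂.mp hh₀
    have hfin := (W.finsep v (s • v)).subset (walls_halfspace_subset hs)
    rcases hB with rfl | rfl
    exacts [hfin, (walls_compl _).symm ▸ hfin]
  refine ⟨F, F.sup fun B => (W.walls B).ncard, fun B hB w => ?_, fun g h hsep => ?_⟩
  · rw [walls_smul hψ (hψbij w), Set.ncard_image_of_injective _ (hψbij w).1]
    exact ⟨(hFwalls B hB).image _, Finset.le_sup (f := fun B => (W.walls B).ncard) hB⟩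
  · obtain ⟨s, hs, h₀, hsep₀, w, hw⟩ := exists_halfspace_eq_smul_of_sep hψ hS v g h hsep
    have hh₀ : h₀ ∈ hH₀.toFinset := hH₀.mem_toFinset.2 (Set.mem_biUnion hs hsep₀)
    rcases W.sideOf_eq_or h v with hv | hv
    · exact ⟨_, Finset.mem_union_left _ (Finset.mem_image_of_mem _ hh₀), w, hv.trans hw⟩
    · refine ⟨_, Finset.mem_union_right _ (Finset.mem_image_of_mem _ hh₀), w, ?_⟩
      rw [hv, Set.smul_set_compl, ← hw]
      rfl

theorem exists_smul_sideOf_ssubset {F : Finset (Set W.V)} {N : ℕ}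
    (hmult : ∀ B ∈ F, ∀ w : Γ, (W.walls (w • B)).Finite ∧ (W.walls (w • B)).ncard ≤ N)
    {v x : W.V} {S₀ : Finset W.H} (hsep : ∀ h ∈ S₀, W.Sep h v x)
    (hdisj : (S₀ : Set W.H).Pairwise W.Disj)
    (htrans : ∀ h ∈ S₀, ∃ B ∈ F, ∃ w : Γ, W.sideOf h v = w • B) (hcard : F.card * N < S₀.card) :
    ∃ (h : W.H) (g : Γ), g • W.sideOf h v ⊂ W.sideOf h v := by
  classical
  choose! B hBF w hw using htrans
  have hfib : ∀ h ∈ S₀, {h' ∈ S₀ | W.sideOf h' v = W.sideOf h v}.card ≤ N := by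
    intro h hh
    obtain ⟨hfin, hN⟩ := hmult (B h) (hBF h hh) (w h)
    rw [← hw h hh] at hfin hN
    refine le_trans ?_ hN
    rw [← Set.ncard_coe_finset]
    refine Set.ncard_le_ncard (fun h' hh' => ?_) hfin
    rw [← (Finset.mem_filter.mp hh').2]
    exact W.mem_walls_sideOf h' v
  obtain ⟨h₁, hh₁, h₂, hh₂, hB, hne⟩ := Finset.exists_eq_and_ne_of_mul_lt_card hBF hfib hcard
  have hd : W.Disj h₁ h₂ := hdisj hh₁ hh₂ fun heq => hne (heq ▸ rfl)
  have hshift : ∀ {h h'}, h ∈ S₀ → h' ∈ S₀ → B h = B h' →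
      (w h * (w h')⁻¹) • W.sideOf h' v = W.sideOf h v := by
    intro h h' hh hh' hB
    rw [hw h hh, hw h' hh', hB, mul_smul, inv_smul_smul]
  rcases sideOf_subset_or_subset (hsep h₁ hh₁) (hsep h₂ hh₂) hd with hsub | hsub
  · exact ⟨h₂, _, (hshift hh₁ hh₂ hB).symm ▸ hsub.ssubset_of_ne hne⟩
  · exact ⟨h₁, _, (hshift hh₂ hh₁ hB.symm).symm ▸ hsub.ssubset_of_ne hne.symm⟩

end Action

end CCC

theorem stmt_14_general (W : CCC) (Γ : Type) [Group Γ] (hFG : Group.FG Γ)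
    (φ : Γ → W.V → W.V) (ψ : Γ → W.H → W.H)
    (hφ1 : φ 1 = id) (hφm : ∀ g g' : Γ, φ (g * g') = φ g ∘ φ g')
    (hψbij : ∀ g : Γ, Function.Bijective (ψ g))
    (hcompat : ∀ (g : Γ) (h : W.H) (v : W.V), W.side (ψ g h) (φ g v) ↔ W.side h v)
    (hunb : ∃ v : W.V, ∀ M : ℕ, ∃ g : Γ, M ≤ W.dinf v (φ g v)) :
    ∃ (J : W.H) (D : Set W.V) (g : Γ),
      (D = {v : W.V | W.side J v} ∨ D = {v : W.V | ¬ W.side J v}) ∧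
      (φ g) '' D ⊂ D := by
  let _ : MulAction Γ W.V :=
    { smul := φ
      one_smul := fun v => congrFun hφ1 v
      mul_smul := fun g g' v => congrFun (hφm g g') v }
  obtain ⟨v, hv⟩ := hunb
  obtain ⟨S, hS⟩ := hFG.out
  obtain ⟨F, N, hmult, htrans⟩ := CCC.exists_finset_translates hcompat hψbij hS v
  obtain ⟨g, hg⟩ := hv (F.card * N + 1)
  obtain ⟨S₀, hcard, hsep, hdisj⟩ := CCC.exists_pairwise_disj_of_le_dinf hg
  obtain ⟨h, g', hss⟩ := CCC.exists_smul_sideOf_ssubset hmult hsep hdisj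
    (fun h hh => htrans g h (hsep h hh)) (by omega)
  exact ⟨h, W.sideOf h v, g', W.sideOf_eq_or h v, hss⟩

/-- If a finitely generated group `Γ` acts on a CAT(0) cube complex with an orbit which
is unbounded for the ℓ∞-metric, then some element sends some half-space strictly inside
itself. -/
theorem stmt_14 (W : CCC) (Γ : Type) [Group Γ] (hFG : Group.FG Γ)
    (φ : Γ → W.V → W.V) (ψ : Γ → W.H → W.H)
    (hφ1 : φ 1 = id) (hφm : ∀ g g' : Γ, φ (g * g') = φ g ∘ φ g')
    (hφbij : ∀ g : Γ, Function.Bijective (φ g))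
    (hψbij : ∀ g : Γ, Function.Bijective (ψ g))
    (hcompat : ∀ (g : Γ) (h : W.H) (v : W.V), W.side (ψ g h) (φ g v) ↔ W.side h v)
    (hunb : ∃ v : W.V, ∀ M : ℕ, ∃ g : Γ, M ≤ W.dinf v (φ g v)) :
    ∃ (J : W.H) (D : Set W.V) (g : Γ),
      (D = {v : W.V | W.side J v} ∨ D = {v : W.V | ¬ W.side J v}) ∧
      (φ g) '' D ⊂ D :=
  stmt_14_general W Γ hFG φ ψ hφ1 hφm hψbij hcompat hunb
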